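/- For every integer n ≥ 1, every tuple (k_1,…,k_n) of positive integers, and every integer N ≥ 0, the Lebesgue measure of {x ∈ E(k_1,…,k_n) : u_{n+1}(x) ≥ N+1} is strictly greater than μ(E(k_1,…,k_n)) / (3(N+2)). -/

import Mathlib

open MeasureTheory

/-- The Gauss map `y ↦ {1/y}`. -/
noncomputable def gaussMap (y : ℝ) : ℝ := Int.fract y⁻¹

/-- For an irrational `x ∈ (0,1)`, `cfCoeff x n` is the `n`-th coefficient `u_n(x)`
(`n ≥ 1`) of the continued fraction expansion `x = [0; u_1(x), u_2(x), …]`. -/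
noncomputable def cfCoeff (x : ℝ) (n : ℕ) : ℕ := ⌊(gaussMap^[n - 1] x)⁻¹⌋₊

/-- The cylinder set `E(k_1,…,k_N)` of irrational `x ∈ (0,1)` whose first `N`
continued fraction coefficients are `k_1, …, k_N`. -/
def cyl (N : ℕ) (k : ℕ → ℕ) : Set ℝ :=
  {x | x ∈ Set.Ioo (0 : ℝ) 1 ∧ Irrational x ∧ ∀ j, 1 ≤ j → j ≤ N → cfCoeff x j = k j}

/-!
Let `T` be the Gauss map. On the cylinder `E(k_1,…,k_n)`, `T^n` is inverted by the linear
fractional map `t ↦ (p + p' t) / (q + q' t)`, where `p/q` and `p'/q'` are the last two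
convergents of `[0; k_1,…,k_n]`, so that `|p' q - p q'| = 1`. Hence the cylinder is the image of
the irrationals of `(0,1)`, and its points with `u_{n+1} ≥ N+1`, i.e. with `T^n x ≤ 1/(N+1)`, form
the image of the irrationals of `(0, 1/(N+1))`. Up to countable sets these are images of intervals
`[0, c]`, of measure `c / (q (q + q' c))`, so the ratio of the two measures is
`(q + q') / ((N+1) q + q') ≥ 1/(N+1)`.
-/

open Set

theorem measure_image_eq_of_countable_diff {α β : Type*} [MeasurableSpace β]
    {μ : Measure β} [NullSingletonClass μ] (f : α → β) {s t : Set α} (hst : s ⊆ t)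
    (hts : (t \ s).Countable) :
    μ (f '' s) = μ (f '' t) := by
  refine le_antisymm (measure_mono (image_mono hst)) ?_
  calc μ (f '' t) ≤ μ (f '' s ∪ f '' (t \ s)) := by
        rw [← image_union, union_sdiff_cancel hst]
    _ ≤ μ (f '' s) + μ (f '' (t \ s)) := measure_union_le _ _
    _ = μ (f '' s) := by rw [(hts.image f).measure_zero, add_zero]

noncomputable def linFrac (p p' q q' : ℕ) (t : ℝ) : ℝ := (p + p' * t) / (q + q' * t)

section linFrac

variable {p p' q q' : ℕ}

theorem linFrac_denom_pos (hq : 0 < q) {t : ℝ} (ht : 0 ≤ t) : 0 < (q : ℝ) + q' * t := by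
  have : (0 : ℝ) < q := by exact_mod_cast hq
  positivity

theorem linFrac_sub_linFrac (hq : 0 < q) {s t : ℝ} (hs : 0 ≤ s) (ht : 0 ≤ t) :
    linFrac p p' q q' t - linFrac p p' q q' s
      = (t - s) * (p' * q - p * q') / ((q + q' * t) * (q + q' * s)) := by
  have := (linFrac_denom_pos (q' := q') hq hs).ne'
  have := (linFrac_denom_pos (q' := q') hq ht).ne'
  unfold linFrac
  field_simp
  ring

theorem continuousOn_linFrac (hq : 0 < q) : ContinuousOn (linFrac p p' q q') (Ici 0) :=
  (by fun_prop : Continuous fun t : ℝ => (p : ℝ) + p' * t).continuousOn.div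
    (by fun_prop) fun _ ht => (linFrac_denom_pos hq ht).ne'

theorem monotoneOn_linFrac (hq : 0 < q) (hdet : (p * q' : ℝ) ≤ p' * q) :
    MonotoneOn (linFrac p p' q q') (Ici 0) := fun s hs t ht hst => by
  have := linFrac_denom_pos (q' := q') hq hs
  have := linFrac_denom_pos (q' := q') hq ht
  have := sub_nonneg.2 hst
  have := sub_nonneg.2 hdet
  rw [← sub_nonneg, linFrac_sub_linFrac hq hs ht]
  positivity

theorem antitoneOn_linFrac (hq : 0 < q) (hdet : (p' * q : ℝ) ≤ p * q') :
    AntitoneOn (linFrac p p' q q') (Ici 0) := fun s hs t ht hst => by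
  have := linFrac_denom_pos (q' := q') hq hs
  have := linFrac_denom_pos (q' := q') hq ht
  rw [← sub_nonpos, linFrac_sub_linFrac hq hs ht]
  exact div_nonpos_of_nonpos_of_nonneg
    (mul_nonpos_of_nonneg_of_nonpos (sub_nonneg.2 hst) (sub_nonpos.2 hdet)) (by positivity)

theorem linFrac_image_uIcc (hq : 0 < q) {c : ℝ} (hc : 0 ≤ c) :
    linFrac p p' q q' '' uIcc 0 c = uIcc (linFrac p p' q q' 0) (linFrac p p' q q' c) := by
  have hsub : uIcc 0 c ⊆ Ici 0 := by
    rw [uIcc_of_le hc]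
    exact Icc_subset_Ici_self
  have hcont := (continuousOn_linFrac (p := p) (p' := p') (q' := q') hq).mono hsub
  rcases le_total (p * q' : ℝ) (p' * q) with hdet | hdet
  · exact hcont.image_uIcc_of_monotoneOn ((monotoneOn_linFrac hq hdet).mono hsub)
  · exact hcont.image_uIcc_of_antitoneOn ((antitoneOn_linFrac hq hdet).mono hsub)

theorem volume_linFrac_image_Icc (hq : 0 < q) (hdet : |(p' * q - p * q' : ℝ)| = 1) {c : ℝ}
    (hc : 0 ≤ c) :
    volume (linFrac p p' q q' '' Icc 0 c) = ENNReal.ofReal (c / (q * (q + q' * c))) := by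
  have := linFrac_denom_pos (q' := q') hq hc
  have : (0 : ℝ) < q := by exact_mod_cast hq
  rw [← uIcc_of_le hc, linFrac_image_uIcc hq hc, Real.volume_interval,
    linFrac_sub_linFrac hq le_rfl hc, abs_div, abs_mul, hdet, sub_zero, abs_of_nonneg hc,
    mul_zero, add_zero, abs_of_pos (by positivity), mul_one, mul_comm (q + _ : ℝ)]

end linFrac

theorem cfCoeff_one (x : ℝ) : cfCoeff x 1 = ⌊x⁻¹⌋₊ := rfl

theorem cfCoeff_succ_of_pos (x : ℝ) {j : ℕ} (hj : 0 < j) :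
    cfCoeff x (j + 1) = cfCoeff (gaussMap x) j := by
  obtain ⟨i, rfl⟩ := Nat.exists_eq_add_of_lt hj
  rfl

theorem gaussMap_inv_natCast_add (m : ℕ) {y : ℝ} (hy : y ∈ Ico 0 1) :
    gaussMap ((m : ℝ) + y)⁻¹ = y := by
  rw [gaussMap, inv_inv, Int.fract_natCast_add, Int.fract_eq_self.2 hy]

theorem cfCoeff_inv_natCast_add (m : ℕ) {y : ℝ} (hy : y ∈ Ico 0 1) :
    cfCoeff ((m : ℝ) + y)⁻¹ 1 = m := by
  rw [cfCoeff_one, inv_inv, add_comm, Nat.floor_add_natCast hy.1, Nat.floor_eq_zero.2 hy.2,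
    zero_add]

theorem inv_natCast_add_mem_Ioo {m : ℕ} (hm : 0 < m) {y : ℝ} (hy : y ∈ Ioo 0 1) :
    ((m : ℝ) + y)⁻¹ ∈ Ioo 0 1 := by
  have : (1 : ℝ) ≤ m := by exact_mod_cast hm
  exact ⟨inv_pos.2 (by linarith [hy.1]), inv_lt_one_of_one_lt₀ (by linarith [hy.1])⟩

theorem irrational_gaussMap {x : ℝ} (hx : Irrational x) : Irrational (gaussMap x) :=
  hx.inv.sub_intCast _

theorem gaussMap_mem_Ioo_of_irrational {x : ℝ} (hx : Irrational x) : gaussMap x ∈ Ioo 0 1 :=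
  ⟨(Int.fract_nonneg _).lt_of_ne'
      (Int.fract_ne_zero_iff.2 fun ⟨m, hm⟩ => hx.inv.ne_int m hm.symm), Int.fract_lt_one _⟩

theorem inv_cfCoeff_one_add_gaussMap {x : ℝ} (hx : 0 ≤ x) :
    ((cfCoeff x 1 : ℝ) + gaussMap x)⁻¹ = x := by
  rw [cfCoeff_one, gaussMap, natCast_floor_eq_intCast_floor (inv_nonneg.2 hx),
    Int.floor_add_fract, inv_inv]

theorem cyl_succ {n : ℕ} {k : ℕ → ℕ} (hk : 0 < k 1) :
    cyl (n + 1) k = (fun y => ((k 1 : ℝ) + y)⁻¹) '' cyl n (fun j => k (j + 1)) := by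
  ext x
  constructor
  · rintro ⟨hx, hirr, hcf⟩
    refine ⟨gaussMap x, ⟨gaussMap_mem_Ioo_of_irrational hirr, irrational_gaussMap hirr,
      fun j hj hjn => ?_⟩, ?_⟩
    · rw [← cfCoeff_succ_of_pos x hj]
      exact hcf (j + 1) (by omega) (by omega)
    · dsimp only
      rw [← hcf 1 le_rfl (by omega), inv_cfCoeff_one_add_gaussMap hx.1.le]
  · rintro ⟨y, ⟨hy, hirr, hcf⟩, rfl⟩
    refine ⟨inv_natCast_add_mem_Ioo hk hy, (hirr.natCast_add _).inv, fun j hj hjn => ?_⟩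
    obtain rfl | ⟨i, hi, rfl⟩ : j = 1 ∨ ∃ i, 0 < i ∧ j = i + 1 := by
      rcases j with _ | _ | i <;> simp_all
    · exact cfCoeff_inv_natCast_add _ (Ioo_subset_Ico_self hy)
    · rw [cfCoeff_succ_of_pos _ hi, gaussMap_inv_natCast_add _ (Ioo_subset_Ico_self hy)]
      exact hcf i hi (by omega)

theorem cyl_succ_inter_preimage {n : ℕ} {k : ℕ → ℕ} (hk : 0 < k 1) (s : Set ℝ) :
    cyl (n + 1) k ∩ gaussMap^[n + 1] ⁻¹' s
      = (fun y => ((k 1 : ℝ) + y)⁻¹) ''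
          (cyl n (fun j => k (j + 1)) ∩ gaussMap^[n] ⁻¹' s) := by
  rw [cyl_succ hk, ← image_inter_preimage]
  congr 1
  ext y
  simp only [mem_inter_iff, mem_preimage, Function.iterate_succ_apply, and_congr_right_iff]
  intro hy
  rw [gaussMap_inv_natCast_add _ (Ioo_subset_Ico_self hy.1)]

theorem cyl_zero (k : ℕ → ℕ) : cyl 0 k = {t | t ∈ Ioo 0 1 ∧ Irrational t} := by
  ext x
  simp only [cyl, mem_ofPred_eq]
  grind

theorem linFrac_zero_one_one_zero : linFrac 0 1 1 0 = id := by
  funext t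
  simp [linFrac]

theorem inv_natCast_add_linFrac (m : ℕ) {p p' q q' : ℕ} (hq : 0 < q) {t : ℝ} (ht : 0 ≤ t) :
    ((m : ℝ) + linFrac p p' q q' t)⁻¹ = linFrac q q' (m * q + p) (m * q' + p') t := by
  have := (linFrac_denom_pos (q' := q') hq ht).ne'
  unfold linFrac
  push_cast
  field_simp
  ring

theorem exists_cyl_inter_preimage_eq_linFrac_image (n : ℕ) (k : ℕ → ℕ)
    (hk : ∀ j, 1 ≤ j → j ≤ n → 1 ≤ k j) :
    ∃ p p' q q' : ℕ, 0 < q ∧ |(p' * q - p * q' : ℝ)| = 1 ∧ ∀ s : Set ℝ,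
      cyl n k ∩ gaussMap^[n] ⁻¹' s
        = linFrac p p' q q' '' ({t | t ∈ Ioo 0 1 ∧ Irrational t} ∩ s) := by
  induction n generalizing k with
  | zero =>
    refine ⟨0, 1, 1, 0, one_pos, by norm_num, fun s => ?_⟩
    rw [linFrac_zero_one_one_zero, image_id, cyl_zero, Function.iterate_zero, preimage_id]
  | succ n ih =>
    obtain ⟨p, p', q, q', hq, hdet, hcyl⟩ :=
      ih (fun j => k (j + 1)) fun j hj hjn => hk (j + 1) (by omega) (by omega)
    have hk1 : 0 < k 1 := hk 1 le_rfl (by omega)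
    refine ⟨q, q', k 1 * q + p, k 1 * q' + p', by positivity, ?_, fun s => ?_⟩
    · rw [← hdet, ← abs_neg]
      push_cast
      ring_nf
    · rw [cyl_succ_inter_preimage hk1, hcyl, image_image]
      exact image_congr fun t ht => inv_natCast_add_linFrac _ hq ht.1.1.1.le

theorem mapsTo_gaussMap :
    MapsTo gaussMap {t | t ∈ Ioo 0 1 ∧ Irrational t} {t | t ∈ Ioo 0 1 ∧ Irrational t} :=
  fun _ ⟨_, h⟩ => ⟨gaussMap_mem_Ioo_of_irrational h, irrational_gaussMap h⟩

theorem add_one_le_floor_inv_iff (N : ℕ) {t : ℝ} (ht : 0 < t) :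
    N + 1 ≤ ⌊t⁻¹⌋₊ ↔ t ≤ ((N : ℝ) + 1)⁻¹ := by
  rw [Nat.le_floor_iff (inv_nonneg.2 ht.le), le_inv_comm₀ (by positivity) ht]
  push_cast
  rfl

theorem volume_linFrac_image_inter_setOf_add_one_le_floor_inv {p p' q q' : ℕ} (hq : 0 < q)
    (hdet : |(p' * q - p * q' : ℝ)| = 1) (N : ℕ) :
    volume (linFrac p p' q q' ''
        ({t | t ∈ Ioo 0 1 ∧ Irrational t} ∩ {t | N + 1 ≤ ⌊t⁻¹⌋₊}))
      = ENNReal.ofReal (1 / (q * ((N + 1) * q + q'))) := by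
  have hc : 0 < ((N : ℝ) + 1)⁻¹ := by positivity
  have hc1 : ((N : ℝ) + 1)⁻¹ ≤ 1 := inv_le_one_of_one_le₀ (by simp)
  rw [measure_image_eq_of_countable_diff _ (t := Icc 0 ((N : ℝ) + 1)⁻¹),
    volume_linFrac_image_Icc hq hdet hc.le]
  · congr 1
    field_simp
  · rintro t ⟨⟨⟨ht0, -⟩, -⟩, htN⟩
    exact ⟨ht0.le, (add_one_le_floor_inv_iff N ht0).1 htN⟩
  · refine (countable_range ((↑) : ℚ → ℝ)).mono fun t ⟨⟨ht0, htc⟩, hnot⟩ => ?_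
    by_contra hirr
    have ht0' : 0 < t := ht0.lt_of_ne' (Irrational.ne_zero hirr)
    exact hnot ⟨⟨⟨ht0', (htc.trans hc1).lt_of_ne (Irrational.ne_one hirr)⟩, hirr⟩,
      (add_one_le_floor_inv_iff N ht0').2 htc⟩

theorem stmt3_general (n : ℕ) (k : ℕ → ℕ) (hk : ∀ j, 1 ≤ j → j ≤ n → 1 ≤ k j)
    (N : ℕ) :
    (volume (cyl n k)).toReal / (3 * ((N : ℝ) + 2))
      < (volume {x : ℝ | x ∈ cyl n k ∧ N + 1 ≤ cfCoeff x (n + 1)}).toReal := by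
  obtain ⟨p, p', q, q', hq, hdet, hcyl⟩ := exists_cyl_inter_preimage_eq_linFrac_image n k hk
  have hvol (M : ℕ) : volume (cyl n k ∩ gaussMap^[n] ⁻¹' {t | M + 1 ≤ ⌊t⁻¹⌋₊})
      = ENNReal.ofReal (1 / (q * ((M + 1) * q + q'))) := by
    rw [hcyl, volume_linFrac_image_inter_setOf_add_one_le_floor_inv hq hdet]
  have hcyl_eq : cyl n k = cyl n k ∩ gaussMap^[n] ⁻¹' {t | 0 + 1 ≤ ⌊t⁻¹⌋₊} := by
    refine (inter_eq_left.2 fun x hx => ?_).symm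
    obtain ⟨⟨ht0, ht1⟩, -⟩ := (mapsTo_gaussMap.iterate n) ⟨hx.1, hx.2.1⟩
    exact (add_one_le_floor_inv_iff 0 ht0).2 (by simpa using ht1.le)
  have hsub_eq : {x | x ∈ cyl n k ∧ N + 1 ≤ cfCoeff x (n + 1)}
      = cyl n k ∩ gaussMap^[n] ⁻¹' {t | N + 1 ≤ ⌊t⁻¹⌋₊} := rfl
  rw [hsub_eq, hvol N, hcyl_eq, hvol 0, ENNReal.toReal_ofReal (by positivity),
    ENNReal.toReal_ofReal (by positivity)]
  have : (0 : ℝ) < q := by exact_mod_cast hq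
  rw [div_div, one_div_lt_one_div (by positivity) (by positivity)]
  have hN : (0 : ℝ) ≤ N := N.cast_nonneg
  have hq' : (0 : ℝ) ≤ q' := q'.cast_nonneg
  rw [Nat.cast_zero, mul_assoc]
  gcongr ?_ * ?_
  nlinarith

theorem stmt3 (n : ℕ) (hn : 1 ≤ n) (k : ℕ → ℕ) (hk : ∀ j, 1 ≤ j → j ≤ n → 1 ≤ k j)
    (N : ℕ) :
    (volume (cyl n k)).toReal / (3 * ((N : ℝ) + 2))
      < (volume {x : ℝ | x ∈ cyl n k ∧ N + 1 ≤ cfCoeff x (n + 1)}).toReal :=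
  stmt3_general n k hk N
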